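/- Let e ≥ 2 be an integer and let u ∈ ℂ⟦X⟧ have nonzero constant coefficient. Set z = X^e · u and let z′ be its formal derivative. Then there exists g ∈ ℂ⟦X⟧ such that z³·(z − 1)⁴·g = (z′)⁶, and the order of g equals 3e − 6. -/

import Mathlib

/-!
With `z = X^e u` one has `z′ = X^(e-1) c` where `c = e u + X u′` has `c(0) = e u(0) ≠ 0`, while
`z³(z-1)⁴ = X^(3e) B` with `B = u³(z-1)⁴` a unit. So `(z′)⁶ = X^(6e-6) c⁶` is divisible by
`z³(z-1)⁴`, and the quotient `X^(3e-6) c⁶ B⁻¹` has order `3e - 6`.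
-/

open PowerSeries

namespace PowerSeries

theorem derivative_X_pow_succ_mul {R : Type*} [CommSemiring R] (n : ℕ) (u : R⟦X⟧) :
    d⁄dX R (X ^ (n + 1) * u) = X ^ n * (((n + 1 : ℕ) : R⟦X⟧) * u + X * d⁄dX R u) := by
  rw [Derivation.leibniz, Derivation.leibniz_pow, derivative_X, smul_eq_mul, smul_eq_mul,
    nsmul_eq_mul, Nat.add_sub_cancel]
  ring

section Field

variable {k : Type*} [Field k]

theorem isUnit_natCast_mul_add_X_mul [CharZero k] {n : ℕ} (hn : n ≠ 0) {u : k⟦X⟧}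
    (hu : constantCoeff u ≠ 0) (v : k⟦X⟧) : IsUnit ((n : k⟦X⟧) * u + X * v) := by
  simp [isUnit_iff_constantCoeff, hn, hu]

theorem isUnit_mul_pow_X_pow_succ_mul_sub_one {u : k⟦X⟧} (hu : constantCoeff u ≠ 0)
    (a b n : ℕ) : IsUnit (u ^ a * (X ^ (n + 1) * u - 1) ^ b) := by
  simp [isUnit_iff_constantCoeff, hu]

end Field

theorem exists_X_pow_mul_mul_eq_and_order_eq {R : Type*} [CommRing R] [IsDomain R]
    (a n : ℕ) {B C : R⟦X⟧} (hB : IsUnit B) (hC : IsUnit C) :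
    ∃ g : R⟦X⟧, X ^ a * B * g = X ^ (a + n) * C ∧ g.order = n := by
  refine ⟨X ^ n * C * (↑hB.unit⁻¹ : R⟦X⟧), ?_, ?_⟩
  · calc X ^ a * B * (X ^ n * C * (↑hB.unit⁻¹ : R⟦X⟧))
          = X ^ (a + n) * C * (B * (↑hB.unit⁻¹ : R⟦X⟧)) := by ring
      _ = X ^ (a + n) * C := by rw [hB.mul_val_inv, mul_one]
  · rw [order_mul, order_mul, order_X_pow, order_zero_of_unit hC,
      order_zero_of_unit hB.unit⁻¹.isUnit, add_zero, add_zero]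

end PowerSeries

/-- For `z = X^e · u` with `u(0) ≠ 0` and `e ≥ 2`, the series `g` with
`z³(z-1)⁴g = (z′)⁶` exists and has order exactly `3e - 6`: the degree-6 symmetric
log tensor with pole orders `3, 4, 5` at `0, 1, ∞` pulls back regularly and
nontrivially along a multiplicity-`e` fiber component over `z = 0`. -/
theorem pullback_six_tensor_order_at_zero (e : ℕ) (he : 2 ≤ e) (u : PowerSeries ℂ)
    (hu : PowerSeries.constantCoeff (R := ℂ) u ≠ 0) :
    ∃ g : PowerSeries ℂ,
      (PowerSeries.X ^ e * u) ^ 3 * ((PowerSeries.X ^ e * u) - 1) ^ 4 * g =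
        (PowerSeries.derivative ℂ (PowerSeries.X ^ e * u)) ^ 6 ∧
      g.order = (3 * e - 6 : ℕ) := by
  obtain ⟨n, rfl⟩ : ∃ n, e = n + 2 := ⟨e - 2, by omega⟩
  have hc := isUnit_natCast_mul_add_X_mul (n + 1).add_one_ne_zero hu (d⁄dX ℂ u)
  have hB := isUnit_mul_pow_X_pow_succ_mul_sub_one hu 3 4 (n + 1)
  obtain ⟨g, hg, hgord⟩ :=
    exists_X_pow_mul_mul_eq_and_order_eq (3 * (n + 2)) (3 * n) hB (hc.pow 6)
  refine ⟨g, ?_, by rwa [show 3 * (n + 2) - 6 = 3 * n by omega]⟩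
  rw [derivative_X_pow_succ_mul]
  convert hg using 1 <;> ring
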